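/- Suppose T : H → H is a bounded operator that is both C-symmetric and J-symmetric for conjugations C, J, that T is injective, and that C T = T* J. Then C J = J C. -/
import Mathlib


open scoped ComplexConjugate ComplexInnerProductSpace

/-- A conjugation on a complex inner product space: an antilinear involution
satisfying `⟪C f, C g⟫ = ⟪g, f⟫`. -/
def IsConjugation {H : Type*} [NormedAddCommGroup H] [InnerProductSpace ℂ H]
    (C : H → H) : Prop :=
  (∀ f g : H, C (f + g) = C f + C g) ∧
  (∀ (a : ℂ) (f : H), C (a • f) = conj a • C f) ∧
  (∀ f : H, C (C f) = f) ∧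
  (∀ f g : H, ⟪C f, C g⟫ = ⟪g, f⟫)
/-- If `T` is injective, `C`- and `J`-symmetric, and `C T = T* J`, then
`C J = J C`. -/
theorem conj_commute_of_CT_eq_adjT_J
    {H : Type*} [NormedAddCommGroup H] [InnerProductSpace ℂ H] [CompleteSpace H]
    (C J : H → H) (hC : IsConjugation C) (hJ : IsConjugation J)
    (T : H →L[ℂ] H) (hinj : Function.Injective T)
    (hTC : ∀ f : H, C (T f) = ContinuousLinearMap.adjoint T (C f))
    (hTJ : ∀ f : H, J (T f) = ContinuousLinearMap.adjoint T (J f))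
    (h : ∀ f : H, C (T f) = ContinuousLinearMap.adjoint T (J f)) :
    ∀ f : H, C (J f) = J (C f) := by
  obtain ⟨hCadd, _, hCinv, _⟩ := hC
  obtain ⟨_, _, hJinv, _⟩ := hJ
  have hC0 : C 0 = 0 := by
    have := hCadd 0 0
    simp at this
    linear_combination (norm := abel) this
  -- T* is injective
  have hadj : Function.Injective (ContinuousLinearMap.adjoint T) := by
    intro x y hxy
    have h1 : C (T (C x)) = C (T (C y)) := by
      rw [hTC, hTC, hCinv, hCinv, hxy]
    have h2 : T (C x) = T (C y) := by
      have := congrArg C h1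
      rwa [hCinv, hCinv] at this
    have h3 : C x = C y := hinj h2
    have := congrArg C h3
    rwa [hCinv, hCinv] at this
  have hCJ : ∀ f, C f = J f := fun f => hadj ((hTC f).symm.trans (h f))
  intro f
  rw [hCJ (J f), hJinv, hCJ f, hJinv]
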